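/- Let E be a real Banach space and let (A, η) be a free Banach f-algebra over E. Let Z be the closed sublattice of A generated by η(E) (the closure of the smallest linear subspace containing η(E) closed under binary suprema). Then: (i) (Z, η) is the free Banach lattice over E, i.e., for every Banach lattice X and every bounded linear operator T : E → X there exists a unique lattice homomorphism T̂ : Z → X with T̂ ∘ η = T and ‖T̂‖ = ‖T‖; and (ii) there exists a lattice homomorphism P : A → A with ‖P‖ ≤ 1 satisfying P ∘ P = P, range of P equal to Z, and P(η(x)) = η(x) for all x ∈ E, so that Z is contractively complemented in A by a lattice homomorphic projection. -/

import Mathlib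

/-!
Every Banach lattice is a Banach f-algebra under the zero product, so freeness of `A` turns
each contraction `E → X` into a lattice homomorphism `A → X` of the same norm; rescaling removes
the bound `‖T‖ ≤ 1`, and restriction to `Z` gives existence in (i). For `X = A` this yields `P`.
Since `P` kills products and preserves suprema, the extension of `η` to the zero-product algebra
`Z`, followed by the inclusion, is another lattice-algebra extension of `η`, so it equals `P`
and the range of `P` lies in `Z`. Two continuous lattice homomorphisms agreeing on `η(E)` agree on
its closed lattice hull `Z`; applied to `P` and the identity, and to the maps of (i) composed
with `P`, this gives `P = id` on `Z` and uniqueness in (i).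
-/

/-- A bundled Banach f-algebra. -/
structure BanachFAlg : Type 1 where
  carrier : Type
  [grp : NormedAddCommGroup carrier]
  [lat : Lattice carrier]
  [ord : IsOrderedAddMonoid carrier]
  [solid : HasSolidNorm carrier]
  [mod : NormedSpace ℝ carrier]
  [compl : CompleteSpace carrier]
  mul : carrier → carrier → carrier
  mul_assoc' : ∀ a b c, mul (mul a b) c = mul a (mul b c)
  add_mul' : ∀ a b c, mul (a + b) c = mul a c + mul b c
  mul_add' : ∀ a b c, mul a (b + c) = mul a b + mul a c
  smul_mul' : ∀ (r : ℝ) (a b), mul (r • a) b = r • mul a b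
  mul_smul' : ∀ (r : ℝ) (a b), mul a (r • b) = r • mul a b
  mul_nonneg' : ∀ a b, 0 ≤ a → 0 ≤ b → 0 ≤ mul a b
  inf_mul_left' : ∀ a b c, a ⊓ b = 0 → 0 ≤ c → mul c a ⊓ b = 0
  inf_mul_right' : ∀ a b c, a ⊓ b = 0 → 0 ≤ c → mul a c ⊓ b = 0
  norm_mul_le' : ∀ a b, ‖mul a b‖ ≤ ‖a‖ * ‖b‖

attribute [instance] BanachFAlg.grp BanachFAlg.lat BanachFAlg.ord BanachFAlg.solid BanachFAlg.mod BanachFAlg.compl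

/-- Lattice-algebra homomorphism between bundled Banach f-algebras. -/
def IsLatAlgHom (A B : BanachFAlg) (T : A.carrier →L[ℝ] B.carrier) : Prop :=
  (∀ a b, T (A.mul a b) = B.mul (T a) (T b)) ∧ (∀ a b, T (a ⊔ b) = T a ⊔ T b)

/-- `(A, η)` is a free Banach f-algebra over `E`. -/
def IsFreeBanachFAlg (E : Type) [NormedAddCommGroup E] [NormedSpace ℝ E]
    (A : BanachFAlg) (η : E →ₗᵢ[ℝ] A.carrier) : Prop :=
  ∀ (B : BanachFAlg) (T : E →L[ℝ] B.carrier), ‖T‖ ≤ 1 →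
    ∃! That : A.carrier →L[ℝ] B.carrier,
      IsLatAlgHom A B That ∧ (∀ x, That (η x) = T x) ∧ ‖That‖ = ‖T‖

/-- A bundled Banach lattice. -/
structure BanachLat : Type 1 where
  carrier : Type
  [grp : NormedAddCommGroup carrier]
  [lat : Lattice carrier]
  [ord : IsOrderedAddMonoid carrier]
  [solid : HasSolidNorm carrier]
  [mod : NormedSpace ℝ carrier]
  [compl : CompleteSpace carrier]

attribute [instance] BanachLat.grp BanachLat.lat BanachLat.ord BanachLat.solid BanachLat.mod BanachLat.compl

/-- The smallest linear subspace of `M` containing `s` that is closed under binary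
suprema. -/
def latticeHull {M : Type} [NormedAddCommGroup M] [Lattice M] [IsOrderedAddMonoid M]
    [HasSolidNorm M] [NormedSpace ℝ M]
    (s : Set M) : Submodule ℝ M :=
  sInf {p : Submodule ℝ M | s ⊆ ↑p ∧ ∀ x y : M, x ∈ p → y ∈ p → x ⊔ y ∈ p}

section OrderedSMul

variable {M : Type*}

lemma inv_two_pow_smul_nonneg [AddCommGroup M] [Lattice M] [IsOrderedAddMonoid M] [Module ℝ M]
    {a : M} (ha : 0 ≤ a) (n : ℕ) : 0 ≤ ((2 : ℝ) ^ n)⁻¹ • a := by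
  induction n with
  | zero => simpa using ha
  | succ n ih =>
    refine nsmul_two_semiclosed ?_
    rwa [← Nat.cast_smul_eq_nsmul ℝ, smul_smul, pow_succ, mul_inv, mul_left_comm,
      Nat.cast_ofNat, mul_inv_cancel₀ two_ne_zero, mul_one]

variable [NormedAddCommGroup M] [Lattice M] [IsOrderedAddMonoid M] [HasSolidNorm M]
  [NormedSpace ℝ M]

-- Nothing ties the order to real scalars a priori: the positive cone is closed and stable under
-- halving, so it contains every dyadic multiple of `a`, and these approximate `r • a`.
lemma HasSolidNorm.smul_nonneg {r : ℝ} (hr : 0 ≤ r) {a : M} (ha : 0 ≤ a) : 0 ≤ r • a := by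
  have hdyadic (n : ℕ) : 0 ≤ ((⌊r * 2 ^ n⌋₊ : ℝ) / 2 ^ n) • a := by
    rw [div_eq_mul_inv, mul_smul, Nat.cast_smul_eq_nsmul]
    exact nsmul_nonneg (inv_two_pow_smul_nonneg ha n) _
  have hlim : Filter.Tendsto (fun n : ℕ => ((⌊r * 2 ^ n⌋₊ : ℝ) / 2 ^ n) • a) Filter.atTop
      (nhds (r • a)) :=
    ((tendsto_nat_floor_mul_div_atTop hr).comp
      (tendsto_pow_atTop_atTop_of_one_lt one_lt_two)).smul_const a
  exact ge_of_tendsto hlim (Filter.Eventually.of_forall hdyadic)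

instance HasSolidNorm.posSMulMono : PosSMulMono ℝ M :=
  PosSMulMono.of_smul_nonneg fun _ hr _ ha => HasSolidNorm.smul_nonneg hr ha

lemma smul_sup_of_nonneg {r : ℝ} (hr : 0 ≤ r) (a b : M) : r • (a ⊔ b) = r • a ⊔ r • b := by
  rcases hr.eq_or_lt with rfl | hr
  · simp
  · exact (OrderIso.smulRight hr).map_sup a b

end OrderedSMul

section LatticeHull

variable {M : Type} [NormedAddCommGroup M] [Lattice M] [IsOrderedAddMonoid M]
  [HasSolidNorm M] [NormedSpace ℝ M]

lemma subset_latticeHull (s : Set M) : s ⊆ latticeHull s := fun _ hx =>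
  Submodule.mem_sInf.mpr fun _ hp => hp.1 hx

lemma sup_mem_latticeHull {s : Set M} {x y : M} (hx : x ∈ latticeHull s)
    (hy : y ∈ latticeHull s) : x ⊔ y ∈ latticeHull s :=
  Submodule.mem_sInf.mpr fun p hp =>
    hp.2 x y (Submodule.mem_sInf.mp hx p hp) (Submodule.mem_sInf.mp hy p hp)

lemma latticeHull_le {s : Set M} {p : Submodule ℝ M} (hs : s ⊆ p)
    (hp : ∀ x y : M, x ∈ p → y ∈ p → x ⊔ y ∈ p) : latticeHull s ≤ p :=
  sInf_le ⟨hs, hp⟩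

lemma sup_mem_topologicalClosure_latticeHull {s : Set M} {x y : M}
    (hx : x ∈ (latticeHull s).topologicalClosure) (hy : y ∈ (latticeHull s).topologicalClosure) :
    x ⊔ y ∈ (latticeHull s).topologicalClosure :=
  map_mem_closure₂ continuous_sup hx hy fun _ hu _ hv => sup_mem_latticeHull hu hv

lemma eqOn_topologicalClosure_latticeHull {N : Type*} [AddCommGroup N] [Module ℝ N]
    [TopologicalSpace N] [T2Space N] [Max N] {s : Set M} {f g : M →L[ℝ] N}
    (hf : ∀ a b, f (a ⊔ b) = f a ⊔ f b) (hg : ∀ a b, g (a ⊔ b) = g a ⊔ g b)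
    (hfg : Set.EqOn f g s) : Set.EqOn f g (latticeHull s).topologicalClosure := by
  refine Submodule.topologicalClosure_minimal _ (t := LinearMap.eqLocus f.toLinearMap g) ?_
    (isClosed_eq f.continuous g.continuous)
  refine latticeHull_le hfg fun a b (ha : f a = g a) (hb : f b = g b) => ?_
  change f (a ⊔ b) = g (a ⊔ b)
  rw [hf, hg, ha, hb]

lemma ContinuousLinearMap.ext_of_latticeRetraction {N : Type*} [AddCommGroup N] [Module ℝ N]
    [TopologicalSpace N] [T2Space N] [Max N] {s : Set M} {Z : Submodule ℝ M}
    (hZ : Z = (latticeHull s).topologicalClosure) {P : M →L[ℝ] M}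
    (hPsup : ∀ a b, P (a ⊔ b) = P a ⊔ P b) (hPZ : ∀ a, P a ∈ Z) (hPfix : ∀ a ∈ Z, P a = a)
    {f g : Z →L[ℝ] N}
    (hf : ∀ (u v : Z) (h : (↑u ⊔ ↑v : M) ∈ Z), f ⟨↑u ⊔ ↑v, h⟩ = f u ⊔ f v)
    (hg : ∀ (u v : Z) (h : (↑u ⊔ ↑v : M) ∈ Z), g ⟨↑u ⊔ ↑v, h⟩ = g u ⊔ g v)
    (hfg : ∀ x (hx : x ∈ Z), x ∈ s → f ⟨x, hx⟩ = g ⟨x, hx⟩) : f = g := by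
  let R : M →L[ℝ] Z := P.codRestrict Z hPZ
  have hR (a : M) (ha : a ∈ Z) : R a = ⟨a, ha⟩ := Subtype.ext (hPfix a ha)
  have hRsup (a b : M) : R (a ⊔ b) = ⟨↑(R a) ⊔ ↑(R b), hPsup a b ▸ hPZ (a ⊔ b)⟩ :=
    Subtype.ext (hPsup a b)
  have hRfg : Set.EqOn (f.comp R) (g.comp R) (latticeHull s).topologicalClosure := by
    refine eqOn_topologicalClosure_latticeHull (fun a b => ?_) (fun a b => ?_) fun x hx => ?_
    · exact (congrArg f (hRsup a b)).trans (hf _ _ _)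
    · exact (congrArg g (hRsup a b)).trans (hg _ _ _)
    · have hxZ : x ∈ Z := hZ ▸ Submodule.le_topologicalClosure _ (subset_latticeHull s hx)
      simpa [hR x hxZ] using hfg x hxZ hx
  ext ⟨z, hz⟩
  have := hRfg (hZ ▸ hz)
  simpa only [ContinuousLinearMap.comp_apply, hR z hz] using this

end LatticeHull

noncomputable abbrev zeroFAlg (X : Type) [NormedAddCommGroup X] [Lattice X]
    [IsOrderedAddMonoid X] [HasSolidNorm X] [NormedSpace ℝ X] [CompleteSpace X] : BanachFAlg where
  carrier := X
  mul _ _ := 0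
  mul_assoc' _ _ _ := rfl
  add_mul' _ _ _ := by simp
  mul_add' _ _ _ := by simp
  smul_mul' _ _ _ := by simp
  mul_smul' _ _ _ := by simp
  mul_nonneg' _ _ _ _ := le_rfl
  inf_mul_left' _ _ _ h _ := by simpa using h ▸ inf_le_right
  inf_mul_right' _ _ _ h _ := by simpa using h ▸ inf_le_right
  norm_mul_le' a b := by simpa using mul_nonneg (norm_nonneg a) (norm_nonneg b)

noncomputable def Submodule.toBanachLat {M : Type} [NormedAddCommGroup M] [Lattice M]
    [IsOrderedAddMonoid M] [HasSolidNorm M] [NormedSpace ℝ M] [CompleteSpace M]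
    (p : Submodule ℝ M) (hsup : ∀ x y, x ∈ p → y ∈ p → x ⊔ y ∈ p)
    (hcl : IsClosed (p : Set M)) : BanachLat :=
  letI : Lattice p := Subtype.lattice hsup fun x y hx hy => by
    rw [eq_sub_of_add_eq (inf_add_sup x y)]
    exact p.sub_mem (p.add_mem hx hy) (hsup x y hx hy)
  letI : HasSolidNorm p :=
    ⟨fun x y (h : |(x : M)| ≤ |(y : M)|) => HasSolidNorm.solid (α := M) h⟩
  letI : CompleteSpace p := hcl.completeSpace_coe
  { carrier := p }

lemma LinearIsometry.norm_toContinuousLinearMap_codRestrict {𝕜 E M : Type*}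
    [NontriviallyNormedField 𝕜] [SeminormedAddCommGroup E] [NormedSpace 𝕜 E] [SeminormedAddCommGroup M] [NormedSpace 𝕜 M]
    (η : E →ₗᵢ[𝕜] M) (Z : Submodule 𝕜 M) (h : ∀ x, η x ∈ Z) :
    ‖η.toContinuousLinearMap.codRestrict Z h‖ = ‖η.toContinuousLinearMap‖ :=
  (Z.subtypeₗᵢ.norm_toContinuousLinearMap_comp (g := η.toContinuousLinearMap.codRestrict Z h)).symm

lemma ContinuousLinearMap.norm_comp_subtypeL_of_norm_comp_eq {E M N : Type*}
    [SeminormedAddCommGroup E] [NormedSpace ℝ E] [SeminormedAddCommGroup M] [NormedSpace ℝ M]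
    [SeminormedAddCommGroup N] [NormedSpace ℝ N] (S : M →L[ℝ] N) (η : E →ₗᵢ[ℝ] M)
    {Z : Submodule ℝ M} (hηZ : ∀ x, η x ∈ Z) (hS : ‖S.comp η.toContinuousLinearMap‖ = ‖S‖) :
    ‖S.comp Z.subtypeL‖ = ‖S‖ := by
  refine le_antisymm ((S.opNorm_comp_le _).trans
    (mul_le_of_le_one_right (norm_nonneg S) (Submodule.norm_subtypeL_le Z))) ?_
  calc ‖S‖ = ‖(S.comp Z.subtypeL).comp (η.toContinuousLinearMap.codRestrict Z hηZ)‖ := hS.symm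
    _ ≤ ‖S.comp Z.subtypeL‖ * ‖η.toContinuousLinearMap.codRestrict Z hηZ‖ := opNorm_comp_le _ _
    _ ≤ ‖S.comp Z.subtypeL‖ := by
      rw [η.norm_toContinuousLinearMap_codRestrict]
      exact mul_le_of_le_one_right (opNorm_nonneg _) η.norm_toContinuousLinearMap_le

namespace IsFreeBanachFAlg

variable {E : Type} [NormedAddCommGroup E] [NormedSpace ℝ E] {A : BanachFAlg}
  {η : E →ₗᵢ[ℝ] A.carrier}

lemma exists_latticeHom_extension (hfree : IsFreeBanachFAlg E A η) (X : BanachLat)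
    (T : E →L[ℝ] X.carrier) :
    ∃ S : A.carrier →L[ℝ] X.carrier, (∀ a b, S (a ⊔ b) = S a ⊔ S b) ∧
      S.comp η.toContinuousLinearMap = T ∧ ‖S‖ = ‖T‖ := by
  have hT' : ‖‖T‖⁻¹ • T‖ ≤ 1 := by
    rw [norm_smul, norm_inv, norm_norm]
    exact inv_mul_le_one
  obtain ⟨S₀, ⟨-, hS₀sup⟩, hS₀η, hS₀norm⟩ := (hfree (zeroFAlg X.carrier) _ hT').exists
  have hS : (‖T‖ • S₀).comp η.toContinuousLinearMap = T := by
    ext x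
    rcases eq_or_ne T 0 with rfl | hT
    · simp
    · simp [hS₀η x, smul_inv_smul₀ (norm_ne_zero_iff.2 hT)]
  refine ⟨‖T‖ • S₀, fun a b => ?_, hS, le_antisymm ?_ ?_⟩
  · simp only [FunLike.coe_smul, Pi.smul_apply, hS₀sup]
    exact smul_sup_of_nonneg (norm_nonneg T) _ _
  · refine (norm_smul_le ‖T‖ S₀).trans ?_
    rw [norm_norm, hS₀norm]
    exact mul_le_of_le_one_right (norm_nonneg T) hT'
  · conv_lhs => rw [← hS]
    exact (ContinuousLinearMap.opNorm_comp_le _ _).trans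
      (mul_le_of_le_one_right (norm_nonneg _) η.norm_toContinuousLinearMap_le)

lemma apply_mem_of_isLatAlgHom_zeroFAlg (hfree : IsFreeBanachFAlg E A η)
    {Z : Submodule ℝ A.carrier} (hZsup : ∀ x y, x ∈ Z → y ∈ Z → x ⊔ y ∈ Z)
    (hZcl : IsClosed (Z : Set A.carrier)) (hηZ : ∀ x, η x ∈ Z)
    {P : A.carrier →L[ℝ] A.carrier} (hP : IsLatAlgHom A (zeroFAlg A.carrier) P)
    (hPη : ∀ x, P (η x) = η x) (hPnorm : ‖P‖ = ‖η.toContinuousLinearMap‖) (a : A.carrier) :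
    P a ∈ Z := by
  let T : E →L[ℝ] (Z.toBanachLat hZsup hZcl).carrier :=
    η.toContinuousLinearMap.codRestrict Z hηZ
  have hT : ‖T‖ = ‖η.toContinuousLinearMap‖ := η.norm_toContinuousLinearMap_codRestrict Z hηZ
  obtain ⟨Q, ⟨hQmul, hQsup⟩, hQη, hQnorm⟩ :=
    (hfree (zeroFAlg (Z.toBanachLat hZsup hZcl).carrier) T
      (hT ▸ η.norm_toContinuousLinearMap_le)).exists
  have hQP : Z.subtypeL.comp (Q : A.carrier →L[ℝ] Z) = P := by
    refine (hfree (zeroFAlg A.carrier) _ η.norm_toContinuousLinearMap_le).unique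
      ⟨⟨fun a b => ?_, fun a b => ?_⟩, fun x => congrArg Subtype.val (hQη x), ?_⟩
      ⟨hP, hPη, hPnorm⟩
    · exact congrArg Subtype.val (hQmul a b)
    · exact congrArg Subtype.val (hQsup a b)
    · exact (Z.subtypeₗᵢ.norm_toContinuousLinearMap_comp (g := (Q : A.carrier →L[ℝ] Z))).trans
        (hQnorm.trans hT)
  exact hQP ▸ (Q a).2

end IsFreeBanachFAlg

theorem stmt2_general (E : Type) [NormedAddCommGroup E] [NormedSpace ℝ E]
    (A : BanachFAlg) (η : E →ₗᵢ[ℝ] A.carrier) (hfree : IsFreeBanachFAlg E A η)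
    (Z : Submodule ℝ A.carrier)
    (hZ : Z = (latticeHull (Set.range η)).topologicalClosure) :
    -- (i) `(Z, η)` is the free Banach lattice over `E`
    (∀ (X : BanachLat) (T : E →L[ℝ] X.carrier),
      ∃! That : ↥Z →L[ℝ] X.carrier,
        (∀ (f g : ↥Z) (h : (↑f ⊔ ↑g : A.carrier) ∈ Z),
            That ⟨(↑f ⊔ ↑g : A.carrier), h⟩ = That f ⊔ That g) ∧
        (∀ (x : E) (hx : η x ∈ Z), That ⟨η x, hx⟩ = T x) ∧
        ‖That‖ = ‖T‖) ∧
    -- (ii) `Z` is contractively complemented in `A` by a lattice homomorphic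
    -- projection
    (∃ P : A.carrier →L[ℝ] A.carrier,
      (∀ a b : A.carrier, P (a ⊔ b) = P a ⊔ P b) ∧
      ‖P‖ ≤ 1 ∧
      (∀ a, P (P a) = P a) ∧
      Set.range P = (Z : Set A.carrier) ∧
      (∀ x : E, P (η x) = η x)) := by
  have hZcl : IsClosed (Z : Set A.carrier) := hZ ▸ Submodule.isClosed_topologicalClosure _
  have hZsup : ∀ a b, a ∈ Z → b ∈ Z → a ⊔ b ∈ Z :=
    hZ ▸ fun _ _ => sup_mem_topologicalClosure_latticeHull
  have hηZ (x : E) : η x ∈ Z :=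
    hZ ▸ Submodule.le_topologicalClosure _ (subset_latticeHull _ ⟨x, rfl⟩)
  obtain ⟨P, hP, hPη, hPnorm⟩ :=
    (hfree (zeroFAlg A.carrier) η.toContinuousLinearMap η.norm_toContinuousLinearMap_le).exists
  have hPZ := hfree.apply_mem_of_isLatAlgHom_zeroFAlg hZsup hZcl hηZ hP hPη hPnorm
  have hPfix (a : A.carrier) (ha : a ∈ Z) : P a = a :=
    eqOn_topologicalClosure_latticeHull (g := ContinuousLinearMap.id ℝ A.carrier) hP.2
      (fun _ _ => rfl) (by rintro _ ⟨x, rfl⟩; exact hPη x) (hZ ▸ ha)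
  refine ⟨fun X T => ?_, P, hP.2, hPnorm ▸ η.norm_toContinuousLinearMap_le,
    fun a => hPfix _ (hPZ a), ?_, hPη⟩
  · obtain ⟨S, hSsup, hST, hSnorm⟩ := hfree.exists_latticeHom_extension X T
    have hSη (x : E) : S (η x) = T x := congrArg (· x) hST
    refine ⟨S.comp Z.subtypeL, ⟨fun f g _ => hSsup f g, fun x _ => hSη x,
      (S.norm_comp_subtypeL_of_norm_comp_eq η hηZ (hST ▸ hSnorm).symm).trans hSnorm⟩,
      fun y ⟨hysup, hyη, _⟩ => ?_⟩
    refine ContinuousLinearMap.ext_of_latticeRetraction hZ hP.2 hPZ hPfix hysup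
      (fun f g _ => hSsup f g) ?_
    rintro _ hx ⟨x, rfl⟩
    exact (hyη x hx).trans (hSη x).symm
  · exact Set.Subset.antisymm (Set.range_subset_iff.2 hPZ) fun a ha => ⟨a, hPfix a ha⟩

theorem stmt2 (E : Type) [NormedAddCommGroup E] [NormedSpace ℝ E] [CompleteSpace E]
    (A : BanachFAlg) (η : E →ₗᵢ[ℝ] A.carrier) (hfree : IsFreeBanachFAlg E A η)
    (Z : Submodule ℝ A.carrier)
    (hZ : Z = (latticeHull (Set.range η)).topologicalClosure) :
    -- (i) `(Z, η)` is the free Banach lattice over `E`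
    (∀ (X : BanachLat) (T : E →L[ℝ] X.carrier),
      ∃! That : ↥Z →L[ℝ] X.carrier,
        (∀ (f g : ↥Z) (h : (↑f ⊔ ↑g : A.carrier) ∈ Z),
            That ⟨(↑f ⊔ ↑g : A.carrier), h⟩ = That f ⊔ That g) ∧
        (∀ (x : E) (hx : η x ∈ Z), That ⟨η x, hx⟩ = T x) ∧
        ‖That‖ = ‖T‖) ∧
    -- (ii) `Z` is contractively complemented in `A` by a lattice homomorphic
    -- projection
    (∃ P : A.carrier →L[ℝ] A.carrier,
      (∀ a b : A.carrier, P (a ⊔ b) = P a ⊔ P b) ∧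
      ‖P‖ ≤ 1 ∧
      (∀ a, P (P a) = P a) ∧
      Set.range P = (Z : Set A.carrier) ∧
      (∀ x : E, P (η x) = η x)) :=
  stmt2_general E A η hfree Z hZ
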